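/- arXiv:2310.14344 — 2 statements merged into one kernel-verified Lean document; each statement's English description precedes it below -/
import Mathlib

section
/- Let X be a random vector in ℝⁿ taking values in a countable set of pairwise distinct points (x_i)_{i ∈ I} with P(X = x_i) = P_i > 0 and Σ_i P_i = 1, let V ~ N(0, I) be independent of X, let σ > 0, and let Y = X + σV. With m_γ(t) = 1 − exp(−t²/γ²), suppose f* : ℝⁿ → ℝⁿ is measurable and minimizes f ↦ lim_{γ→0⁺} 𝔼[m_γ(‖f(Y) − X‖)] over all measurable f : ℝⁿ → ℝⁿ. Then for Lebesgue-almost every y ∈ ℝⁿ, f*(y) ∈ {x_i : i ∈ I} and φ_{σ²}(y − f*(y)) · P(X = f*(y)) = sup_{i ∈ I} φ_{σ²}(y − x_i) P_i; that is, f*(y) is the maximum a posteriori estimate of X given Y = y almost surely. -/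
open Filter Topology MeasureTheory ProbabilityTheory
open scoped ENNReal

/-!
As `γ → 0⁺`, `1 - exp (-t² / γ²)` tends to the indicator of `t ≠ 0`, so by dominated convergence
the limiting loss of `f` is `P(f(Y) ≠ X)`: a minimiser maximises the probability `P(f(Y) = X)` of
an exact guess. Conditioning on `X = x_i`, this probability is
`∫ ∑ᵢ 1[f y = x_i] φ_{σ²}(y - x_i) P_i dy`, whose integrand is at most
`M y = supᵢ φ_{σ²}(y - x_i) P_i`, with equality exactly when `f y` is a maximiser. The weights are
summable, so the supremum is attained, and choosing the maximiser of least index (in an enumeration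
of the index set) gives a measurable `f` achieving `∫ M`. Optimality of `f*` then forces its
integrand to equal `M` almost everywhere.
-/

noncomputable def gaussDensity (n : ℕ) (s : ℝ) (u : EuclideanSpace ℝ (Fin n)) : ℝ :=
  (2 * Real.pi * s) ^ (-(n : ℝ) / 2) * Real.exp (-‖u‖ ^ 2 / (2 * s))

section Gaussian

variable {n : ℕ}

lemma gaussDensity_pos {s : ℝ} (hs : 0 < s) (u : EuclideanSpace ℝ (Fin n)) :
    0 < gaussDensity n s u := by
  unfold gaussDensity
  positivity

lemma gaussDensity_nonneg {s : ℝ} (hs : 0 ≤ s) (u : EuclideanSpace ℝ (Fin n)) :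
    0 ≤ gaussDensity n s u := by
  unfold gaussDensity
  positivity

lemma gaussDensity_le {s : ℝ} (hs : 0 ≤ s) (u : EuclideanSpace ℝ (Fin n)) :
    gaussDensity n s u ≤ (2 * Real.pi * s) ^ (-(n : ℝ) / 2) := by
  have hexp : Real.exp (-‖u‖ ^ 2 / (2 * s)) ≤ 1 :=
    Real.exp_le_one_iff.mpr (div_nonpos_of_nonpos_of_nonneg (by simp) (by positivity))
  exact mul_le_of_le_one_right (by positivity) hexp

@[fun_prop]
lemma continuous_gaussDensity (s : ℝ) : Continuous (gaussDensity n s) := by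
  unfold gaussDensity
  fun_prop

lemma pow_mul_gaussDensity_smul {σ : ℝ} (hσ : 0 < σ) (u : EuclideanSpace ℝ (Fin n)) :
    σ ^ n * gaussDensity n (σ ^ 2) (σ • u) = gaussDensity n 1 u := by
  have hexp : -‖σ • u‖ ^ 2 / (2 * σ ^ 2) = -‖u‖ ^ 2 / (2 * 1) := by
    rw [norm_smul, Real.norm_eq_abs, abs_of_pos hσ]
    field_simp
  have hcoef : σ ^ n * (2 * Real.pi * σ ^ 2) ^ (-(n : ℝ) / 2)
      = (2 * Real.pi * 1) ^ (-(n : ℝ) / 2) := by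
    rw [mul_one, Real.mul_rpow (by positivity) (by positivity), ← Real.rpow_natCast σ 2,
      ← Real.rpow_mul hσ.le, ← Real.rpow_natCast σ n, mul_left_comm, ← Real.rpow_add hσ]
    rw [show (n : ℝ) + (2 : ℕ) * (-(n : ℝ) / 2) = 0 by push_cast; ring, Real.rpow_zero,
      mul_one]
  unfold gaussDensity
  rw [hexp, ← hcoef]
  ring

lemma map_add_smul_volume (c : EuclideanSpace ℝ (Fin n)) {σ : ℝ} (hσ : 0 < σ) :
    (volume : Measure (EuclideanSpace ℝ (Fin n))).map (fun v => c + σ • v)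
      = ENNReal.ofReal ((σ ^ n)⁻¹) • volume := by
  have hcomp : (fun v : EuclideanSpace ℝ (Fin n) => c + σ • v) = (c + ·) ∘ (σ • ·) := rfl
  rw [hcomp, ← Measure.map_map (measurable_const_add c) (measurable_const_smul σ),
    Measure.map_addHaar_smul volume hσ.ne', Measure.map_smul, map_add_left_eq_self,
    finrank_euclideanSpace_fin, abs_of_pos (by positivity)]

lemma map_add_smul_withDensity_gaussDensity (c : EuclideanSpace ℝ (Fin n)) {σ : ℝ}
    (hσ : 0 < σ) :
    ((volume : Measure (EuclideanSpace ℝ (Fin n))).withDensity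
        (fun u => ENNReal.ofReal (gaussDensity n 1 u))).map (fun v => c + σ • v)
      = volume.withDensity (fun y => ENNReal.ofReal (gaussDensity n (σ ^ 2) (y - c))) := by
  have hT : Measurable (fun v : EuclideanSpace ℝ (Fin n) => c + σ • v) := by fun_prop
  have hvol : (volume : Measure (EuclideanSpace ℝ (Fin n)))
      = ENNReal.ofReal (σ ^ n) • volume.map (fun v => c + σ • v) := by
    rw [map_add_smul_volume c hσ, smul_smul, ← ENNReal.ofReal_mul (by positivity),
      mul_inv_cancel₀ (by positivity), ENNReal.ofReal_one, one_smul]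
  ext s hs
  have hdens : Measurable fun y : EuclideanSpace ℝ (Fin n) =>
      ENNReal.ofReal (gaussDensity n (σ ^ 2) (y - c)) := by fun_prop
  rw [Measure.map_apply hT hs, withDensity_apply _ (hT hs), withDensity_apply _ hs]
  conv_rhs => rw [hvol]
  rw [Measure.restrict_smul, lintegral_smul_measure, setLIntegral_map hs hdens hT,
    smul_eq_mul, ← lintegral_const_mul' _ _ ENNReal.ofReal_ne_top]
  refine setLIntegral_congr_fun (hT hs) fun u _ => ?_
  rw [← ENNReal.ofReal_mul (by positivity), add_sub_cancel_left,
    pow_mul_gaussDensity_smul hσ]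

end Gaussian

lemma tendsto_one_sub_exp_neg_sq_div_sq (t : ℝ) :
    Tendsto (fun γ : ℝ => 1 - Real.exp (-t ^ 2 / γ ^ 2)) (𝓝[>] 0)
      (𝓝 (if t = 0 then 0 else 1)) := by
  split_ifs with ht
  · simp [ht]
  have hquot : Tendsto (fun γ : ℝ => t ^ 2 * γ⁻¹ ^ 2) (𝓝[>] 0) atTop :=
    ((tendsto_pow_atTop two_ne_zero).comp tendsto_inv_nhdsGT_zero).const_mul_atTop
      (by positivity)
  have hexp := (Real.tendsto_exp_neg_atTop_nhds_zero.comp hquot).const_sub 1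
  rw [sub_zero] at hexp
  refine hexp.congr fun γ => ?_
  simp only [Function.comp_apply]
  ring_nf

lemma tendsto_integral_one_sub_exp_neg_norm_sub_sq {Ω E : Type*} [MeasurableSpace Ω]
    {μ : Measure Ω} [IsFiniteMeasure μ] [NormedAddCommGroup E] [MeasurableSpace E]
    [BorelSpace E] [SecondCountableTopology E] {U W : Ω → E} (hU : Measurable U)
    (hW : Measurable W) :
    Tendsto (fun γ : ℝ => ∫ ω, (1 - Real.exp (-‖U ω - W ω‖ ^ 2 / γ ^ 2)) ∂μ) (𝓝[>] 0)
      (𝓝 (μ.real {ω | U ω ≠ W ω})) := by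
  change Tendsto _ _ (𝓝 (μ.real {ω | U ω = W ω}ᶜ))
  rw [← integral_indicator_one (measurableSet_eq_fun hU hW).compl]
  refine tendsto_integral_filter_of_dominated_convergence (fun _ => 1)
    (.of_forall fun γ => ?_) (.of_forall fun γ => .of_forall fun ω => ?_) (integrable_const 1)
    (.of_forall fun ω => ?_)
  · exact Measurable.aestronglyMeasurable (by fun_prop)
  · have hexp_le : Real.exp (-‖U ω - W ω‖ ^ 2 / γ ^ 2) ≤ 1 :=
      Real.exp_le_one_iff.mpr (div_nonpos_of_nonpos_of_nonneg (by simp) (by positivity))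
    rw [Real.norm_of_nonneg (sub_nonneg.mpr hexp_le)]
    linarith [Real.exp_pos (-‖U ω - W ω‖ ^ 2 / γ ^ 2)]
  · convert tendsto_one_sub_exp_neg_sq_div_sq ‖U ω - W ω‖ using 2
    by_cases h : U ω = W ω <;> simp [h, sub_eq_zero]

lemma measure_eq_le_of_tendsto_le {Ω E : Type*} [MeasurableSpace Ω] {μ : Measure Ω}
    [IsProbabilityMeasure μ] [NormedAddCommGroup E] [MeasurableSpace E] [BorelSpace E]
    [SecondCountableTopology E] {U U' W : Ω → E} (hU : Measurable U) (hU' : Measurable U')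
    (hW : Measurable W) {l l' : ℝ}
    (hl : Tendsto (fun γ : ℝ => ∫ ω, (1 - Real.exp (-‖U ω - W ω‖ ^ 2 / γ ^ 2)) ∂μ) (𝓝[>] 0)
      (𝓝 l))
    (hl' : Tendsto (fun γ : ℝ => ∫ ω, (1 - Real.exp (-‖U' ω - W ω‖ ^ 2 / γ ^ 2)) ∂μ) (𝓝[>] 0)
      (𝓝 l'))
    (hle : l' ≤ l) : μ {ω | U ω = W ω} ≤ μ {ω | U' ω = W ω} := by
  rw [tendsto_nhds_unique hl (tendsto_integral_one_sub_exp_neg_norm_sub_sq hU hW),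
    tendsto_nhds_unique hl' (tendsto_integral_one_sub_exp_neg_norm_sub_sq hU' hW)] at hle
  change μ.real {ω | U' ω = W ω}ᶜ ≤ μ.real {ω | U ω = W ω}ᶜ at hle
  rwa [probReal_compl_eq_one_sub (measurableSet_eq_fun hU' hW),
    probReal_compl_eq_one_sub (measurableSet_eq_fun hU hW), sub_le_sub_iff_left, measureReal_def,
    measureReal_def, ENNReal.toReal_le_toReal (measure_ne_top _ _) (measure_ne_top _ _)] at hle

section MatchDensity

variable {α β ι : Type*} {x : ι → β} {a : ι → α → ℝ≥0∞} {f : α → β} {y : α}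

/-- When `a i` is the joint density of `X = x i` and `Y = y`, this is the density in `y` of the
event `f Y = X`. -/
noncomputable def matchDensity (x : ι → β) (a : ι → α → ℝ≥0∞) (f : α → β) (y : α) : ℝ≥0∞ :=
  ∑' i, (f ⁻¹' {x i}).indicator (a i) y

lemma matchDensity_of_eq (hx : x.Injective) {j : ι} (h : f y = x j) :
    matchDensity x a f y = a j y := by
  rw [matchDensity, tsum_eq_single j fun i hij => Set.indicator_of_notMem (s := f ⁻¹' {x i})
    (fun hi => hij (hx ((hi : f y = x i).symm.trans h))) (a i)]
  exact Set.indicator_of_mem (s := f ⁻¹' {x j}) h (a j)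

lemma matchDensity_of_forall_ne (h : ∀ i, f y ≠ x i) : matchDensity x a f y = 0 :=
  ENNReal.tsum_eq_zero.mpr fun i => Set.indicator_of_notMem (s := f ⁻¹' {x i}) (h i) _

lemma matchDensity_le_iSup (hx : x.Injective) : matchDensity x a f y ≤ ⨆ i, a i y := by
  by_cases h : ∃ j, f y = x j
  · obtain ⟨j, hj⟩ := h
    exact (matchDensity_of_eq hx hj).trans_le (le_iSup (a · y) j)
  · simp only [not_exists] at h
    simp [matchDensity_of_forall_ne h]

lemma exists_eq_and_forall_le_of_matchDensity_eq_iSup (hx : x.Injective)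
    (h : matchDensity x a f y = ⨆ i, a i y) (hpos : ∃ i, a i y ≠ 0) :
    ∃ j, f y = x j ∧ ∀ i, a i y ≤ a j y := by
  by_cases hf : ∃ j, f y = x j
  · obtain ⟨j, hj⟩ := hf
    refine ⟨j, hj, fun i => ?_⟩
    rw [← matchDensity_of_eq (a := a) hx hj, h]
    exact le_iSup (a · y) i
  · simp only [not_exists] at hf
    rw [matchDensity_of_forall_ne hf, eq_comm, ENNReal.iSup_eq_zero] at h
    obtain ⟨i, hi⟩ := hpos
    exact absurd (h i) hi

variable [MeasurableSpace α] [MeasurableSpace β] [Countable ι]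

lemma exists_measurable_matchDensity_eq_iSup [Nonempty ι] (hx : x.Injective)
    (ha : ∀ i, Measurable (a i)) (hmax : ∀ y, ∃ j, ∀ i, a i y ≤ a j y) :
    ∃ g : α → β, Measurable g ∧ ∀ y, matchDensity x a g y = ⨆ i, a i y := by
  classical
  obtain ⟨e, he⟩ := exists_surjective_nat ι
  have hex : ∀ y, ∃ k, ∀ i, a i y ≤ a (e k) y := fun y => by
    obtain ⟨j, hj⟩ := hmax y
    obtain ⟨k, rfl⟩ := he j
    exact ⟨k, hj⟩
  have hsets : ∀ k, MeasurableSet {y | ∀ i, a i y ≤ a (e k) y} := fun k => by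
    simp only [Set.ofPred_forall]
    exact .iInter fun i => measurableSet_le (ha i) (ha (e k))
  let g : α → β := fun y => x (e (Nat.find (hex y)))
  refine ⟨g, Measurable.find (f := fun k _ => x (e k)) (fun _ => measurable_const) hsets hex,
    fun y => (matchDensity_of_eq (f := g) hx rfl).trans ?_⟩
  exact le_antisymm (le_iSup (a · y) _) (iSup_le (Nat.find_spec (hex y)))

lemma matchDensity_ae_eq_iSup [Nonempty ι] {μ : Measure α}
    (hx : x.Injective) (ha : ∀ i, Measurable (a i)) (hmax : ∀ y, ∃ j, ∀ i, a i y ≤ a j y)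
    (hopt : ∀ g : α → β, Measurable g →
      ∫⁻ y, matchDensity x a g y ∂μ ≤ ∫⁻ y, matchDensity x a f y ∂μ)
    (hfin : ∫⁻ y, matchDensity x a f y ∂μ ≠ ∞) :
    matchDensity x a f =ᵐ[μ] fun y => ⨆ i, a i y := by
  obtain ⟨g, hg, hgmax⟩ := exists_measurable_matchDensity_eq_iSup hx ha hmax
  refine ae_eq_of_ae_le_of_lintegral_le (.of_forall fun _ => matchDensity_le_iSup hx) hfin
    (Measurable.iSup ha).aemeasurable ?_
  simpa only [hgmax] using hopt g hg

end MatchDensity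

lemma ENNReal.exists_forall_le_of_tsum_ne_top {ι : Type*} [Nonempty ι] {a : ι → ℝ≥0∞}
    (h : ∑' i, a i ≠ ∞) : ∃ j, ∀ i, a i ≤ a j := by
  by_cases hzero : ∀ i, a i = 0
  · exact ⟨Classical.arbitrary ι, fun i => by simp [hzero]⟩
  simp only [not_forall] at hzero
  obtain ⟨i₀, hi₀⟩ := hzero
  obtain ⟨j, hj, hjmax⟩ := Set.exists_max_image {i | a i₀ ≤ a i} a
    (ENNReal.finite_const_le_of_tsum_ne_top h hi₀) ⟨i₀, Set.mem_ofPred.mpr le_rfl⟩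
  refine ⟨j, fun i => ?_⟩
  by_cases hi : a i₀ ≤ a i
  · exact hjmax i hi
  · exact (not_le.mp hi).le.trans hj

section Posterior

variable {n : ℕ} {I : Type*}

noncomputable def posteriorWeight (σ : ℝ) (x : I → EuclideanSpace ℝ (Fin n)) (P : I → ℝ) (i : I)
    (y : EuclideanSpace ℝ (Fin n)) : ℝ≥0∞ :=
  ENNReal.ofReal (gaussDensity n (σ ^ 2) (y - x i) * P i)

variable {σ : ℝ} {x : I → EuclideanSpace ℝ (Fin n)} {P : I → ℝ}

lemma measurable_posteriorWeight (i : I) : Measurable (posteriorWeight σ x P i) := by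
  unfold posteriorWeight
  fun_prop

lemma posteriorWeight_ne_zero (hσ : σ ≠ 0) {i : I} (hP : 0 < P i) (y : EuclideanSpace ℝ (Fin n)) :
    posteriorWeight σ x P i y ≠ 0 :=
  (ENNReal.ofReal_pos.mpr (mul_pos (gaussDensity_pos (by positivity) _) hP)).ne'

lemma tsum_posteriorWeight_ne_top (hP : ∀ i, 0 ≤ P i) (hPs : Summable P)
    (y : EuclideanSpace ℝ (Fin n)) : ∑' i, posteriorWeight σ x P i y ≠ ∞ := by
  set C := (2 * Real.pi * σ ^ 2) ^ (-(n : ℝ) / 2)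
  have hle : ∀ i, posteriorWeight σ x P i y ≤ ENNReal.ofReal C * ENNReal.ofReal (P i) := fun i => by
    rw [posteriorWeight, ← ENNReal.ofReal_mul (by positivity)]
    exact ENNReal.ofReal_le_ofReal
      (mul_le_mul_of_nonneg_right (gaussDensity_le (by positivity) _) (hP i))
  refine ne_top_of_le_ne_top ?_ (ENNReal.tsum_le_tsum hle)
  rw [ENNReal.tsum_mul_left, ← ENNReal.ofReal_tsum_of_nonneg hP hPs]
  exact ENNReal.mul_ne_top ENNReal.ofReal_ne_top ENNReal.ofReal_ne_top

lemma iSup_gaussDensity_mul_eq_of_forall_posteriorWeight_le {j : I} (hPj : 0 ≤ P j)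
    {y : EuclideanSpace ℝ (Fin n)}
    (h : ∀ i, posteriorWeight σ x P i y ≤ posteriorWeight σ x P j y) :
    ⨆ i, gaussDensity n (σ ^ 2) (y - x i) * P i = gaussDensity n (σ ^ 2) (y - x j) * P j := by
  have hle (i : I) : gaussDensity n (σ ^ 2) (y - x i) * P i
      ≤ gaussDensity n (σ ^ 2) (y - x j) * P j :=
    (ENNReal.ofReal_le_ofReal_iff (mul_nonneg (gaussDensity_nonneg (sq_nonneg σ) _) hPj)).mp (h i)
  have : Nonempty I := ⟨j⟩
  exact le_antisymm (ciSup_le hle) (le_ciSup ⟨_, Set.forall_mem_range.mpr hle⟩ j)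

end Posterior

lemma measure_eq_lintegral_matchDensity {n : ℕ} {Ω I : Type*} [MeasurableSpace Ω] {μ : Measure Ω}
    [Countable I] {x : I → EuclideanSpace ℝ (Fin n)} (hx : x.Injective) {P : I → ℝ}
    {X V Y : Ω → EuclideanSpace ℝ (Fin n)} (hX : Measurable X) (hV : Measurable V)
    (hXval : ∀ ω, ∃ i, X ω = x i) (hXP : ∀ i, μ {ω | X ω = x i} = ENNReal.ofReal (P i))
    (hVlaw : μ.map V = (volume : Measure (EuclideanSpace ℝ (Fin n))).withDensity
      (fun u => ENNReal.ofReal (gaussDensity n 1 u)))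
    (hindep : IndepFun X V μ) {σ : ℝ} (hσ : 0 < σ) (hY : ∀ ω, Y ω = X ω + σ • V ω)
    {f : EuclideanSpace ℝ (Fin n) → EuclideanSpace ℝ (Fin n)} (hf : Measurable f) :
    μ {ω | f (Y ω) = X ω} = ∫⁻ y, matchDensity x (posteriorWeight σ x P) f y := by
  let T (i : I) (v : EuclideanSpace ℝ (Fin n)) := x i + σ • v
  have hT (i : I) : Measurable (T i) := by fun_prop
  have hA (i : I) : MeasurableSet (f ⁻¹' {x i}) := hf (measurableSet_singleton _)
  let S (i : I) := X ⁻¹' {x i} ∩ V ⁻¹' (T i ⁻¹' (f ⁻¹' {x i}))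
  have hdecomp : {ω | f (Y ω) = X ω} = ⋃ i, S i := by
    ext ω
    obtain ⟨i, hi⟩ := hXval ω
    simp only [Set.mem_ofPred_eq, Set.mem_iUnion, Set.mem_inter_iff, Set.mem_preimage,
      Set.mem_singleton_iff, hY, S, T]
    constructor
    · exact fun h => ⟨i, hi, by rw [← hi, h]⟩
    · rintro ⟨j, hj, h⟩
      rw [hj, h]
  have hdisj : Pairwise (Function.onFun Disjoint S) :=
    fun i j hij => Set.disjoint_left.mpr fun ω hi hj => hij (hx (hi.1.symm.trans hj.1))
  have hterm (i : I) : μ (S i) = ∫⁻ y, (f ⁻¹' {x i}).indicator (posteriorWeight σ x P i) y := by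
    have hlaw : (μ.map V).map (T i) = volume.withDensity
        (fun y => ENNReal.ofReal (gaussDensity n (σ ^ 2) (y - x i))) := by
      rw [hVlaw]
      exact map_add_smul_withDensity_gaussDensity (x i) hσ
    have hweight : (fun y => ENNReal.ofReal (P i) * ENNReal.ofReal
        (gaussDensity n (σ ^ 2) (y - x i))) = posteriorWeight σ x P i := by
      ext y
      rw [posteriorWeight, mul_comm, ENNReal.ofReal_mul (gaussDensity_nonneg (sq_nonneg σ) _)]
    rw [hindep.measure_inter_preimage_eq_mul _ _ (measurableSet_singleton _) (hT i (hA i)),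
      ← Measure.map_apply hV (hT i (hA i)), ← Measure.map_apply (hT i) (hA i), hlaw,
      withDensity_apply _ (hA i), show μ (X ⁻¹' {x i}) = ENNReal.ofReal (P i) from hXP i,
      ← lintegral_const_mul' _ _ ENNReal.ofReal_ne_top, ← lintegral_indicator (hA i), hweight]
  have hS (i : I) : MeasurableSet (S i) := (hX (measurableSet_singleton _)).inter (hV (hT i (hA i)))
  rw [hdecomp, measure_iUnion hdisj hS, tsum_congr hterm, ← lintegral_tsum fun i =>
    ((measurable_posteriorWeight i).indicator (hA i)).aemeasurable]
  rfl

/-- **Learning via proximal matching, discrete case.** Let `X` take values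
in a countable set of pairwise distinct points `x_i` with `P(X = x_i) = P_i > 0` summing
to one, `V ~ N(0, I)` independent of `X`, `σ > 0`, `Y = X + σV`, and
`m_γ(t) = 1 − exp(−t²/γ²)`. If a measurable `f*` minimizes
`f ↦ lim_{γ→0⁺} 𝔼[m_γ(‖f(Y) − X‖)]` over measurable `f`, then for Lebesgue-almost every
`y`, `f*(y)` lies in `{x_i}` and `φ_{σ²}(y − f*(y)) P(X = f*(y)) = sup_i φ_{σ²}(y − x_i) P_i`,
i.e. `f*(y)` is the MAP estimate of `X` given `Y = y`. -/
theorem statement10 {n : ℕ} {Ω : Type*} [MeasureSpace Ω]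
    [IsProbabilityMeasure (ℙ : Measure Ω)]
    {I : Type*} [Countable I]
    (x : I → EuclideanSpace ℝ (Fin n)) (hxinj : Function.Injective x)
    (P : I → ℝ) (hP : ∀ i, 0 < P i) (hPsum : ∑' i, P i = 1)
    (X V Y : Ω → EuclideanSpace ℝ (Fin n)) (hX : Measurable X) (hV : Measurable V)
    (hXval : ∀ ω, ∃ i, X ω = x i)
    (hXP : ∀ i, (ℙ {ω : Ω | X ω = x i}).toReal = P i)
    (hVlaw : Measure.map V ℙ =
      (volume : Measure (EuclideanSpace ℝ (Fin n))).withDensity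
        (fun u => ENNReal.ofReal (gaussDensity n 1 u)))
    (hindep : IndepFun X V ℙ)
    (σ : ℝ) (hσ : 0 < σ) (hY : ∀ ω, Y ω = X ω + σ • V ω)
    (fstar : EuclideanSpace ℝ (Fin n) → EuclideanSpace ℝ (Fin n))
    (hfstar : Measurable fstar)
    (L : (EuclideanSpace ℝ (Fin n) → EuclideanSpace ℝ (Fin n)) → ℝ)
    (hL : ∀ f : EuclideanSpace ℝ (Fin n) → EuclideanSpace ℝ (Fin n), Measurable f →
      Tendsto (fun γ : ℝ => ∫ ω, (1 - Real.exp (-‖f (Y ω) - X ω‖ ^ 2 / γ ^ 2)) ∂ℙ)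
        (𝓝[>] (0 : ℝ)) (𝓝 (L f)))
    (hmin : ∀ f : EuclideanSpace ℝ (Fin n) → EuclideanSpace ℝ (Fin n), Measurable f →
      L fstar ≤ L f) :
    ∀ᵐ y ∂(volume : Measure (EuclideanSpace ℝ (Fin n))),
      (∃ i, fstar y = x i) ∧
      gaussDensity n (σ ^ 2) (y - fstar y) * (ℙ {ω : Ω | X ω = fstar y}).toReal
        = ⨆ i, gaussDensity n (σ ^ 2) (y - x i) * P i := by
  have hPs : Summable P := by
    by_contra h
    simp [tsum_eq_zero_of_not_summable h] at hPsum
  have : Nonempty I := by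
    by_contra h
    simp [not_nonempty_iff.mp h] at hPsum
  have hYm : Measurable Y := by
    rw [funext hY]
    exact hX.add (hV.const_smul σ)
  have hcorrect (f : EuclideanSpace ℝ (Fin n) → EuclideanSpace ℝ (Fin n)) (hf : Measurable f) :
      ℙ {ω | f (Y ω) = X ω} = ∫⁻ y, matchDensity x (posteriorWeight σ x P) f y :=
    measure_eq_lintegral_matchDensity hxinj hX hV hXval
      (fun i => by rw [← hXP i, ENNReal.ofReal_toReal (measure_ne_top _ _)]) hVlaw hindep hσ hY hf
  have hopt (f : EuclideanSpace ℝ (Fin n) → EuclideanSpace ℝ (Fin n)) (hf : Measurable f) :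
      ∫⁻ y, matchDensity x (posteriorWeight σ x P) f y
        ≤ ∫⁻ y, matchDensity x (posteriorWeight σ x P) fstar y := by
    rw [← hcorrect f hf, ← hcorrect fstar hfstar]
    exact measure_eq_le_of_tendsto_le (hf.comp hYm) (hfstar.comp hYm) hX (hL f hf)
      (hL fstar hfstar) (hmin f hf)
  have hae := matchDensity_ae_eq_iSup hxinj measurable_posteriorWeight
    (fun y => ENNReal.exists_forall_le_of_tsum_ne_top
      (tsum_posteriorWeight_ne_top (fun i => (hP i).le) hPs y))
    hopt ((hcorrect fstar hfstar).symm ▸ measure_ne_top _ _)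
  filter_upwards [hae] with y hy
  obtain ⟨j, hj, hjmax⟩ := exists_eq_and_forall_le_of_matchDensity_eq_iSup hxinj hy
    ⟨Classical.arbitrary I, posteriorWeight_ne_zero hσ.ne' (hP _) y⟩
  refine ⟨⟨j, hj⟩, ?_⟩
  rw [hj, hXP j, iSup_gaussDensity_mul_eq_of_forall_posteriorWeight_le (hP j).le hjmax]
end

section
/- Let ψ : ℝⁿ → ℝ be convex, continuously differentiable, L-Lipschitz, and with L′-Lipschitz gradient ∇ψ, and let 0 < α < 1. Define f(y) = ∇ψ(y) + α y (a bijection of ℝⁿ) and h(y) = (1−α)⟨y, ∇ψ(y)⟩ + (α(1−α)/2)‖y‖² − (1/2)‖∇ψ(y)‖² − ψ(y). Then the function R : ℝⁿ → ℝ defined by R(x) = h(f⁻¹(x)) is coercive: R(x) → +∞ as ‖x‖ → ∞. Moreover there exist constants c > 0 and M > 0 (depending only on α, L, L′, ψ(0), and f⁻¹(0)) such that R(x) ≥ c‖x‖² whenever ‖x‖ ≥ M. -/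
open scoped RealInnerProductSpace

/-! A Lipschitz `ψ` has bounded gradient, so `x = ∇ψ(y) + αy` with `y = f⁻¹(x)` gives
`‖x‖ ≤ L + α‖y‖`, while in `h(y)` the term `(α(1-α)/2)‖y‖²` dominates the remaining terms,
which grow at most linearly in `‖y‖`. Hence `R(x) = h(y)` grows like `‖y‖² ≳ ‖x‖²/(4α²)`. -/

lemma LipschitzWith.le_abs_apply_zero_add {F : Type*} [SeminormedAddCommGroup F] {ψ : F → ℝ}
    {K : NNReal} (hψ : LipschitzWith K ψ) (y : F) :
    ψ y ≤ |ψ 0| + K * ‖y‖ := by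
  have h := hψ.dist_le_mul y 0
  rw [Real.dist_eq, dist_zero_right] at h
  linarith [le_abs_self (ψ y - ψ 0), le_abs_self (ψ 0)]

section Gradient

variable {E : Type*} [NormedAddCommGroup E] [InnerProductSpace ℝ E] [CompleteSpace E]
  {ψ : E → ℝ} {K : NNReal}

lemma norm_gradient_le_of_lipschitzWith (hψ : LipschitzWith K ψ) (y : E) :
    ‖gradient ψ y‖ ≤ K := by
  rw [gradient, LinearIsometryEquiv.norm_map]
  exact norm_fderiv_le_of_lipschitz ℝ hψ

lemma norm_gradient_add_smul_le (hψ : LipschitzWith K ψ) (α : ℝ) (y : E) :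
    ‖gradient ψ y + α • y‖ ≤ K + |α| * ‖y‖ := by
  calc ‖gradient ψ y + α • y‖ ≤ ‖gradient ψ y‖ + ‖α • y‖ := norm_add_le _ _
    _ ≤ K + |α| * ‖y‖ := by
      rw [norm_smul, Real.norm_eq_abs]
      exact add_le_add_left (norm_gradient_le_of_lipschitzWith hψ y) _

/-- The paper's `h`; the regularizer is `R = h ∘ f⁻¹`. -/
noncomputable def lpnPotential (ψ : E → ℝ) (α : ℝ) (y : E) : ℝ :=
  (1 - α) * ⟪y, gradient ψ y⟫ + α * (1 - α) / 2 * ‖y‖ ^ 2 - 1 / 2 * ‖gradient ψ y‖ ^ 2 - ψ y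

lemma le_lpnPotential (hψ : LipschitzWith K ψ) {α : ℝ} (hα0 : 0 ≤ α) (hα1 : α ≤ 1) (y : E) :
    α * (1 - α) / 2 * ‖y‖ ^ 2 - 2 * K * ‖y‖ - (K ^ 2 / 2 + |ψ 0|) ≤ lpnPotential ψ α y := by
  have hgrad := norm_gradient_le_of_lipschitzWith hψ y
  have hinner : -(‖y‖ * K) ≤ ⟪y, gradient ψ y⟫ := by
    have := abs_real_inner_le_norm y (gradient ψ y)
    nlinarith [neg_abs_le ⟪y, gradient ψ y⟫, norm_nonneg y]
  have hsq : ‖gradient ψ y‖ ^ 2 ≤ K ^ 2 := pow_le_pow_left₀ (norm_nonneg _) hgrad 2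
  have hK : (0 : ℝ) ≤ ‖y‖ * K := mul_nonneg (norm_nonneg y) K.2
  unfold lpnPotential
  linarith [mul_le_mul_of_nonneg_left hinner (sub_nonneg.2 hα1), hψ.le_abs_apply_zero_add y,
    mul_nonneg hα0 hK]

end Gradient

section Growth

variable {X : Type*} {s t r : X → ℝ}

lemma exists_forall_ge_linear_le_half_mul_sq {β : ℝ} (hβ : 0 < β) (a b : ℝ) :
    ∃ T, ∀ u, T ≤ u → a * u + b ≤ β / 2 * u ^ 2 := by
  refine ⟨max 1 (2 * (|a| + |b|) / β), fun u hu => ?_⟩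
  have hu1 : 1 ≤ u := (le_max_left _ _).trans hu
  have hβu : 2 * (|a| + |b|) ≤ β * u := by
    rw [← div_le_iff₀' hβ]; exact (le_max_right _ _).trans hu
  calc a * u + b ≤ |a| * u + |b| * u := by
        nlinarith [le_abs_self a, le_abs_self b, abs_nonneg b]
    _ = (|a| + |b|) * u := by ring
    _ ≤ β / 2 * u ^ 2 := by nlinarith

lemma exists_mul_sq_le_of_le_quadratic {α β L a b : ℝ} (hα : 0 < α) (hβ : 0 < β)
    (hst : ∀ x, s x ≤ L + α * t x)
    (hr : ∀ x, β * t x ^ 2 - a * t x - b ≤ r x) :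
    ∃ c > (0 : ℝ), ∃ M > (0 : ℝ), ∀ x, M ≤ s x → c * s x ^ 2 ≤ r x := by
  obtain ⟨T, hT⟩ := exists_forall_ge_linear_le_half_mul_sq hβ a b
  refine ⟨β / (8 * α ^ 2), by positivity, max 1 (max (2 * L) (L + α * T)), by positivity,
    fun x hx => ?_⟩
  have hs0 : 0 ≤ s x := zero_le_one.trans ((le_max_left _ _).trans hx)
  have hs₁ : 2 * L ≤ s x := le_trans (le_trans (le_max_left _ _) (le_max_right _ _)) hx
  have hs₂ : L + α * T ≤ s x := le_trans (le_trans (le_max_right _ _) (le_max_right _ _)) hx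
  have htT : T ≤ t x := le_of_mul_le_mul_left (by linarith [hst x]) hα
  have hs2t : s x ≤ 2 * α * t x := by linarith [hst x]
  calc β / (8 * α ^ 2) * s x ^ 2 ≤ β / (8 * α ^ 2) * (2 * α * t x) ^ 2 := by gcongr
    _ = β / 2 * t x ^ 2 := by field_simp; ring
    _ ≤ β * t x ^ 2 - a * t x - b := by linarith [hT (t x) htT]
    _ ≤ r x := hr x

lemma forall_exists_le_of_mul_sq_le {c M : ℝ} (hc : 0 < c)
    (h : ∀ x, M ≤ s x → c * s x ^ 2 ≤ r x) (C : ℝ) :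
    ∃ D, ∀ x, D ≤ s x → C ≤ r x := by
  refine ⟨max M (max 1 (|C| / c)), fun x hx => ?_⟩
  have hs1 : 1 ≤ s x := le_trans (le_trans (le_max_left _ _) (le_max_right _ _)) hx
  have hCs : |C| ≤ c * s x := by
    rw [← div_le_iff₀' hc]; exact le_trans (le_trans (le_max_right _ _) (le_max_right _ _)) hx
  calc C ≤ c * s x := (le_abs_self C).trans hCs
    _ ≤ c * s x * s x := le_mul_of_one_le_right (by positivity) hs1
    _ = c * s x ^ 2 := by ring
    _ ≤ r x := h x ((le_max_left _ _).trans hx)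

end Growth

theorem statement14_general {n : ℕ} (ψ : EuclideanSpace ℝ (Fin n) → ℝ)
    (L : ℝ)
    (hLip : ∀ y y', |ψ y - ψ y'| ≤ L * ‖y - y'‖)
    (α : ℝ) (hα0 : 0 < α) (hα1 : α < 1)
    (f : EuclideanSpace ℝ (Fin n) → EuclideanSpace ℝ (Fin n))
    (hf : ∀ y, f y = gradient ψ y + α • y)
    (g : EuclideanSpace ℝ (Fin n) → EuclideanSpace ℝ (Fin n))
    (hfg : Function.RightInverse g f)
    (R : EuclideanSpace ℝ (Fin n) → ℝ)
    (hR : ∀ x, R x = (1 - α) * ⟪g x, gradient ψ (g x)⟫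
      + α * (1 - α) / 2 * ‖g x‖ ^ 2 - 1 / 2 * ‖gradient ψ (g x)‖ ^ 2 - ψ (g x)) :
    (∀ C : ℝ, ∃ D : ℝ, ∀ x, D ≤ ‖x‖ → C ≤ R x) ∧
    ∃ c > (0 : ℝ), ∃ M > (0 : ℝ), ∀ x, M ≤ ‖x‖ → c * ‖x‖ ^ 2 ≤ R x := by
  have hψ : LipschitzWith L.toNNReal ψ := LipschitzWith.of_dist_le' fun y y' => by
    simpa only [Real.dist_eq, dist_eq_norm y] using hLip y y'
  have hnorm (x) : ‖x‖ ≤ L.toNNReal + α * ‖g x‖ := by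
    simpa only [← hf, hfg x, abs_of_pos hα0] using norm_gradient_add_smul_le hψ α (g x)
  have hRlow (x) : α * (1 - α) / 2 * ‖g x‖ ^ 2 - 2 * L.toNNReal * ‖g x‖
      - (L.toNNReal ^ 2 / 2 + |ψ 0|) ≤ R x := by
    simpa only [hR, lpnPotential] using le_lpnPotential hψ hα0.le hα1.le (g x)
  have hβ : 0 < α * (1 - α) / 2 := by have := sub_pos.2 hα1; positivity
  obtain ⟨c, hc, M, hM, hgrowth⟩ := exists_mul_sq_le_of_le_quadratic hα0 hβ hnorm hRlow
  exact ⟨forall_exists_le_of_mul_sq_le hc hgrowth, c, hc, M, hM, hgrowth⟩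

/-- **Coercivity of the regularizer of an LPN.** Let `ψ : ℝⁿ → ℝ` be
convex, continuously differentiable, `L`-Lipschitz, with `L′`-Lipschitz gradient, and
`0 < α < 1`. Let `f(y) = ∇ψ(y) + αy` (a bijection of `ℝⁿ`, with inverse `g`) and
`h(y) = (1−α)⟨y, ∇ψ(y)⟩ + (α(1−α)/2)‖y‖² − (1/2)‖∇ψ(y)‖² − ψ(y)`. Then
`R(x) = h(f⁻¹(x))` is coercive, and there are `c > 0`, `M > 0` with `R(x) ≥ c‖x‖²`
whenever `‖x‖ ≥ M`. -/
theorem statement14 {n : ℕ} (ψ : EuclideanSpace ℝ (Fin n) → ℝ)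
    (hconv : ConvexOn ℝ Set.univ ψ) (hC1 : ContDiff ℝ 1 ψ)
    (L L' : ℝ)
    (hLip : ∀ y y', |ψ y - ψ y'| ≤ L * ‖y - y'‖)
    (hLipGrad : ∀ y y', ‖gradient ψ y - gradient ψ y'‖ ≤ L' * ‖y - y'‖)
    (α : ℝ) (hα0 : 0 < α) (hα1 : α < 1)
    (f : EuclideanSpace ℝ (Fin n) → EuclideanSpace ℝ (Fin n))
    (hf : ∀ y, f y = gradient ψ y + α • y)
    (g : EuclideanSpace ℝ (Fin n) → EuclideanSpace ℝ (Fin n))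
    (hgf : Function.LeftInverse g f) (hfg : Function.RightInverse g f)
    (R : EuclideanSpace ℝ (Fin n) → ℝ)
    (hR : ∀ x, R x = (1 - α) * ⟪g x, gradient ψ (g x)⟫
      + α * (1 - α) / 2 * ‖g x‖ ^ 2 - 1 / 2 * ‖gradient ψ (g x)‖ ^ 2 - ψ (g x)) :
    (∀ C : ℝ, ∃ D : ℝ, ∀ x, D ≤ ‖x‖ → C ≤ R x) ∧
    ∃ c > (0 : ℝ), ∃ M > (0 : ℝ), ∀ x, M ≤ ‖x‖ → c * ‖x‖ ^ 2 ≤ R x :=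
  statement14_general ψ L hLip α hα0 hα1 f hf g hfg R hR
end
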